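/- Fix integers n ≥ 2 and N ≥ 1, maps f : ℝ^(2n−1) × ℝ → ℝ and ĉ : ℝ × ℝ^(2n−1) → ℝ, and a dataset of triples (y_i⁺, ζ_i, u_i) ∈ ℝ × ℝ^(2n−1) × ℝ, i = 1,…,N. Suppose γ_u, γ_y : [0,∞) → [0,∞) satisfy, for every i and every ζ ∈ ℝ^(2n−1): |u_i − ĉ(y_i⁺, ζ)| ≤ γ_u(‖ζ_i − ζ‖) and |y_i⁺ − f(ζ, ĉ(y_i⁺, ζ))| ≤ γ_y(‖ζ_i − ζ‖). Then for every i and every ζ ∈ ℝ^(2n−1), ‖ζ_i⁺ − Φ(ζ, y_i⁺)‖ ≤ γ_u(‖ζ_i − ζ‖) + γ_y(‖ζ_i − ζ‖) + ‖ζ_i − ζ‖. -/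

import Mathlib

/-
The data successor `ζ_i⁺` and the closed-loop successor `Φ(ζ, y_i⁺)` are both obtained by the
same shift-and-insert map `zplus`, with inserted values `(y_i⁺, u_i)` and
`(f(ζ, ĉ(y_i⁺, ζ)), ĉ(y_i⁺, ζ))` respectively. That map is linear, so their difference is the
shift of `ζ_i − ζ` with the two errors inserted. The triangle inequality splits it into the two
inserted coordinates and the shifted state, and the shift is a non-expansive reindexing.
-/

/-- The closed-loop one-step map with reference `yr`:
`Φ(ζ, yr) = (y₂,…,yₙ, f(ζ, ĉ(yr, ζ)), u₂,…,u_{n−1}, ĉ(yr, ζ))` for the augmented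
state `ζ = (y₁,…,yₙ,u₁,…,u_{n−1}) ∈ ℝ^(2n−1)` (0-indexed coordinates). -/
noncomputable def Phi (n : ℕ) (f : EuclideanSpace ℝ (Fin (2*n-1)) → ℝ → ℝ)
    (chat : ℝ → EuclideanSpace ℝ (Fin (2*n-1)) → ℝ)
    (ζ : EuclideanSpace ℝ (Fin (2*n-1))) (yr : ℝ) : EuclideanSpace ℝ (Fin (2*n-1)) :=
  WithLp.toLp 2 fun (k : Fin (2*n-1)) =>
    if (k : ℕ) = n - 1 then f ζ (chat yr ζ)
    else if h : (k : ℕ) = 2*n - 2 then chat yr ζ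
    else ζ ⟨(k : ℕ) + 1, by have := k.isLt; omega⟩

/-- For a data triple `(y_i⁺, ζ_i, u_i)`, the shifted successor state
`ζ_i⁺ = (y_{i,2},…,y_{i,n}, y_i⁺, u_{i,2},…,u_{i,n−1}, u_i)`. -/
noncomputable def zplus (n : ℕ) (yp : ℝ) (ζ : EuclideanSpace ℝ (Fin (2*n-1))) (ui : ℝ) :
    EuclideanSpace ℝ (Fin (2*n-1)) :=
  WithLp.toLp 2 fun (k : Fin (2*n-1)) =>
    if (k : ℕ) = n - 1 then yp
    else if h : (k : ℕ) = 2*n - 2 then ui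
    else ζ ⟨(k : ℕ) + 1, by have := k.isLt; omega⟩

/-- Backward reachable set `R⁻(A) = {ζ : ∃ i, Φ(ζ, y_i⁺) ∈ A}`. -/
def Rminus (n N : ℕ) (f : EuclideanSpace ℝ (Fin (2*n-1)) → ℝ → ℝ)
    (chat : ℝ → EuclideanSpace ℝ (Fin (2*n-1)) → ℝ) (yd : Fin N → ℝ)
    (A : Set (EuclideanSpace ℝ (Fin (2*n-1)))) : Set (EuclideanSpace ℝ (Fin (2*n-1))) :=
  {ζ | ∃ i : Fin N, Phi n f chat ζ (yd i) ∈ A}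

/-- `S_δ = {ζ : |ζₙ| ≤ δ}` (the n-th coordinate is index `n-1`, 0-indexed). -/
def Sdelta (n : ℕ) (hn : 1 ≤ n) (δ : ℝ) : Set (EuclideanSpace ℝ (Fin (2*n-1))) :=
  {ζ | |ζ ⟨n - 1, by omega⟩| ≤ δ}

open Finset in
theorem EuclideanSpace.norm_le_of_injOn {ι κ : Type*} [Fintype ι] [Fintype κ]
    {v : EuclideanSpace ℝ ι} {w : EuclideanSpace ℝ κ} (e : ι → κ)
    (he : Set.InjOn e {k | v k ≠ 0}) (h : ∀ k, |v k| ≤ |w (e k)|) : ‖v‖ ≤ ‖w‖ := by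
  classical
  set S := univ.filter fun k => v k ≠ 0
  have hS : (S : Set ι) = {k | v k ≠ 0} := by ext; simp [S]
  rw [← hS] at he
  refine (pow_le_pow_iff_left₀ (norm_nonneg v) (norm_nonneg w) two_ne_zero).1 ?_
  calc ‖v‖ ^ 2 = ∑ k ∈ S, v k ^ 2 := by
        rw [EuclideanSpace.real_norm_sq_eq, sum_filter_of_ne]; simp
    _ ≤ ∑ k ∈ S, w (e k) ^ 2 := sum_le_sum fun k _ => sq_le_sq.2 (h k)
    _ = ∑ j ∈ S.image e, w j ^ 2 := (sum_image (f := fun j => w j ^ 2) he).symm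
    _ ≤ ∑ j, w j ^ 2 := sum_le_univ_sum_of_nonneg fun j => sq_nonneg _
    _ = ‖w‖ ^ 2 := (EuclideanSpace.real_norm_sq_eq w).symm

theorem EuclideanSpace.norm_le_of_subsingleton_support {ι : Type*} [Fintype ι]
    {v : EuclideanSpace ℝ ι} {a : ℝ} (hv : {k | v k ≠ 0}.Subsingleton) (h : ∀ k, |v k| ≤ |a|) :
    ‖v‖ ≤ |a| :=
  (norm_le_of_injOn (w := EuclideanSpace.single () a) (fun _ => ())
    (fun _ hk _ hk' _ => hv hk hk') h).trans_eq (by simp)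

section zplus

variable {n : ℕ}

theorem Phi_eq_zplus (f : EuclideanSpace ℝ (Fin (2*n-1)) → ℝ → ℝ)
    (chat : ℝ → EuclideanSpace ℝ (Fin (2*n-1)) → ℝ) (ζ : EuclideanSpace ℝ (Fin (2*n-1)))
    (yr : ℝ) : Phi n f chat ζ yr = zplus n (f ζ (chat yr ζ)) ζ (chat yr ζ) :=
  rfl

theorem zplus_sub_zplus (y y' u u' : ℝ) (ζ ζ' : EuclideanSpace ℝ (Fin (2*n-1))) :
    zplus n y ζ u - zplus n y' ζ' u' = zplus n (y - y') (ζ - ζ') (u - u') := by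
  ext k
  simp only [zplus, PiLp.sub_apply]
  split_ifs <;> rfl

theorem zplus_eq_add (y u : ℝ) (ζ : EuclideanSpace ℝ (Fin (2*n-1))) :
    zplus n y ζ u = zplus n y 0 0 + zplus n 0 0 u + zplus n 0 ζ 0 := by
  ext k
  simp only [zplus, PiLp.add_apply, PiLp.zero_apply]
  split_ifs <;> simp

theorem norm_zplus_output_le (y : ℝ) : ‖zplus (n := n) y 0 0‖ ≤ |y| := by
  refine EuclideanSpace.norm_le_of_subsingleton_support (fun k hk k' hk' => ?_) fun k => ?_
  · simp only [zplus, Set.mem_ofPred_eq] at hk hk'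
    split_ifs at hk hk' <;> first | exact Fin.ext (by omega) | simp at hk hk'
  · simp only [zplus]
    split_ifs <;> simp

theorem norm_zplus_input_le (u : ℝ) : ‖zplus (n := n) 0 0 u‖ ≤ |u| := by
  refine EuclideanSpace.norm_le_of_subsingleton_support (fun k hk k' hk' => ?_) fun k => ?_
  · simp only [zplus, Set.mem_ofPred_eq] at hk hk'
    split_ifs at hk hk' <;> first | exact Fin.ext (by omega) | simp at hk hk'
  · simp only [zplus]
    split_ifs <;> simp

theorem norm_zplus_state_le (ζ : EuclideanSpace ℝ (Fin (2*n-1))) : ‖zplus n 0 ζ 0‖ ≤ ‖ζ‖ := by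
  -- `zplus n 0 ζ 0` reads `ζ` along `k ↦ k + 1`; the wrap-around is harmless since it only
  -- affects the vanishing last coordinate.
  refine EuclideanSpace.norm_le_of_injOn (fun k => ⟨(k + 1) % (2*n-1), Nat.mod_lt _ k.pos⟩)
    ?_ fun k => ?_
  · have hlt : ∀ j, zplus n 0 ζ 0 j ≠ 0 → (j : ℕ) + 1 < 2*n-1 := fun j hj => by
      by_contra hj'
      exact hj (by simp [zplus, show (j : ℕ) = 2*n-2 by omega])
    intro k hk k' hk' hkk'
    have := congrArg Fin.val hkk'
    simp only [Nat.mod_eq_of_lt (hlt k hk), Nat.mod_eq_of_lt (hlt k' hk')] at this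
    exact Fin.ext (by omega)
  · simp only [zplus]
    split_ifs
    · simp
    · simp
    · simp only [Nat.mod_eq_of_lt (by omega : (k : ℕ) + 1 < 2*n-1), le_refl]

theorem norm_zplus_le (y u : ℝ) (ζ : EuclideanSpace ℝ (Fin (2*n-1))) :
    ‖zplus n y ζ u‖ ≤ |y| + |u| + ‖ζ‖ := by
  rw [zplus_eq_add]
  exact (norm_add₃_le).trans (add_le_add_three (norm_zplus_output_le y) (norm_zplus_input_le u)
    (norm_zplus_state_le ζ))

end zplus

theorem stmt_2_general (n N : ℕ)
    (f : EuclideanSpace ℝ (Fin (2*n-1)) → ℝ → ℝ)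
    (chat : ℝ → EuclideanSpace ℝ (Fin (2*n-1)) → ℝ)
    (yd : Fin N → ℝ) (ζd : Fin N → EuclideanSpace ℝ (Fin (2*n-1))) (ud : Fin N → ℝ)
    (γu γy : ℝ → ℝ)
    (hγu : ∀ (i : Fin N) (ζ : EuclideanSpace ℝ (Fin (2*n-1))),
      |ud i - chat (yd i) ζ| ≤ γu ‖ζd i - ζ‖)
    (hγy : ∀ (i : Fin N) (ζ : EuclideanSpace ℝ (Fin (2*n-1))),
      |yd i - f ζ (chat (yd i) ζ)| ≤ γy ‖ζd i - ζ‖) :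
    ∀ (i : Fin N) (ζ : EuclideanSpace ℝ (Fin (2*n-1))),
      ‖zplus n (yd i) (ζd i) (ud i) - Phi n f chat ζ (yd i)‖ ≤
        γu ‖ζd i - ζ‖ + γy ‖ζd i - ζ‖ + ‖ζd i - ζ‖ := by
  intro i ζ
  rw [Phi_eq_zplus, zplus_sub_zplus]
  linarith [norm_zplus_le (yd i - f ζ (chat (yd i) ζ)) (ud i - chat (yd i) ζ) (ζd i - ζ),
    hγu i ζ, hγy i ζ]

/-- Proposition 2: if the input and output errors are bounded by
`γ_u` and `γ_y`, then the augmented-state error is bounded by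
`γ_u(‖ζ_i − ζ‖) + γ_y(‖ζ_i − ζ‖) + ‖ζ_i − ζ‖`. -/
theorem stmt_2 (n N : ℕ) (hn : 2 ≤ n) (hN : 1 ≤ N)
    (f : EuclideanSpace ℝ (Fin (2*n-1)) → ℝ → ℝ)
    (chat : ℝ → EuclideanSpace ℝ (Fin (2*n-1)) → ℝ)
    (yd : Fin N → ℝ) (ζd : Fin N → EuclideanSpace ℝ (Fin (2*n-1))) (ud : Fin N → ℝ)
    (γu γy : ℝ → ℝ)
    (hγu_nonneg : ∀ s, 0 ≤ s → 0 ≤ γu s) (hγy_nonneg : ∀ s, 0 ≤ s → 0 ≤ γy s)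
    (hγu : ∀ (i : Fin N) (ζ : EuclideanSpace ℝ (Fin (2*n-1))),
      |ud i - chat (yd i) ζ| ≤ γu ‖ζd i - ζ‖)
    (hγy : ∀ (i : Fin N) (ζ : EuclideanSpace ℝ (Fin (2*n-1))),
      |yd i - f ζ (chat (yd i) ζ)| ≤ γy ‖ζd i - ζ‖) :
    ∀ (i : Fin N) (ζ : EuclideanSpace ℝ (Fin (2*n-1))),
      ‖zplus n (yd i) (ζd i) (ud i) - Phi n f chat ζ (yd i)‖ ≤
        γu ‖ζd i - ζ‖ + γy ‖ζd i - ζ‖ + ‖ζd i - ζ‖ :=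
  stmt_2_general n N f chat yd ζd ud γu γy hγu hγy
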